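/- (Verma module realizes the relation {c₊, c₋} = 2A₋) As linear operators on M, the anticommutator identity c₊ ∘ c₋ + c₋ ∘ c₊ = 2·A₋ holds. -/

import Mathlib

/-!
Verma module `M(h,f)` over the ℤ₂×ℤ₂ graded superalgebra of Rittenberg–Wyler,
realized on the space of finitely supported functions `ℕ × Fin 2 × Fin 2 →₀ ℂ`,
with basis vectors `e k μ ν`.
-/

noncomputable section

/-- Index set for the basis of the Verma module. -/
abbrev Idx : Type := ℕ × Fin 2 × Fin 2

/-- The underlying space of the Verma module `M(h,f)`. -/
abbrev Mmod : Type := Idx →₀ ℂ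

/-- The standard basis vector `e(k,μ,ν)`. -/
def e (k : ℕ) (μ ν : Fin 2) : Mmod := Finsupp.single (k, μ, ν) 1

/-- Build a linear operator on `Mmod` from its values on basis vectors. -/
def mkOp (φ : Idx → Mmod) : Mmod →ₗ[ℂ] Mmod := Finsupp.lift Mmod ℂ Idx φ

/-- The lowering operator `A₋`.
`A₋ e(k,μ,ν) = 4k(h+k+μ+ν−1)·e(k−1,μ,ν) + 4(h+f)·δ_{μ,1}δ_{ν,1}·e(k,0,0)`
(with the convention `e(−1,μ,ν) = 0`, automatic since the coefficient vanishes at `k = 0`). -/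
def Am (h f : ℂ) : Mmod →ₗ[ℂ] Mmod :=
  mkOp fun p =>
    (4 * (p.1 : ℂ) * (h + (p.1 : ℂ) + ((p.2.1 : ℕ) : ℂ) + ((p.2.2 : ℕ) : ℂ) - 1))
        • e (p.1 - 1) p.2.1 p.2.2
    + (if p.2.1 = 1 ∧ p.2.2 = 1 then (4 * (h + f)) • e p.1 0 0 else 0)

/-- The lowering operator `c₊`.
`c₊ e(k,μ,ν) = 2(h+2k+2ν−f)·δ_{μ,1}·e(k,0,ν) + (−1)^μ·2k·δ_{ν,0}·e(k−1,μ,1)`. -/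
def cp (h f : ℂ) : Mmod →ₗ[ℂ] Mmod :=
  mkOp fun p =>
    (if p.2.1 = 1 then
        (2 * (h + 2 * (p.1 : ℂ) + 2 * ((p.2.2 : ℕ) : ℂ) - f)) • e p.1 0 p.2.2 else 0)
    + (if p.2.2 = 0 then
        ((-1 : ℂ) ^ (p.2.1 : ℕ) * (2 * (p.1 : ℂ))) • e (p.1 - 1) p.2.1 1 else 0)

/-- The lowering operator `c₋`.
`c₋ e(k,μ,ν) = (−1)^μ·2(h+f)·δ_{ν,1}·e(k,μ,0) + 2k·δ_{μ,0}·e(k−1,1,ν)`. -/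
def cm (h f : ℂ) : Mmod →ₗ[ℂ] Mmod :=
  mkOp fun p =>
    (if p.2.2 = 1 then
        ((-1 : ℂ) ^ (p.2.1 : ℕ) * (2 * (h + f))) • e p.1 p.2.1 0 else 0)
    + (if p.2.1 = 0 then (2 * (p.1 : ℂ)) • e (p.1 - 1) 1 p.2.2 else 0)

/-- The raising operator `A₊`: `A₊ e(k,μ,ν) = e(k+1,μ,ν)`. -/
def Ap : Mmod →ₗ[ℂ] Mmod := mkOp fun p => e (p.1 + 1) p.2.1 p.2.2

/-- The raising operator `d₊`: `d₊ e(k,μ,ν) = δ_{μ,0}·e(k,1,ν)`. -/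
def dp : Mmod →ₗ[ℂ] Mmod := mkOp fun p => if p.2.1 = 0 then e p.1 1 p.2.2 else 0

/-- The raising operator `d₋`:
`d₋ e(k,μ,ν) = (−1)^μ·δ_{ν,0}·e(k,μ,1) + 2·δ_{μ,1}·e(k+1,0,ν)`. -/
def dm : Mmod →ₗ[ℂ] Mmod :=
  mkOp fun p =>
    (if p.2.2 = 0 then ((-1 : ℂ) ^ (p.2.1 : ℕ)) • e p.1 p.2.1 1 else 0)
    + (if p.2.1 = 1 then (2 : ℂ) • e (p.1 + 1) 0 p.2.2 else 0)

/-- The Cartan operator `N`: `N e(k,μ,ν) = (h+2k+μ+ν)·e(k,μ,ν)`. -/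
def Nop (h : ℂ) : Mmod →ₗ[ℂ] Mmod :=
  mkOp fun p =>
    (h + 2 * (p.1 : ℂ) + ((p.2.1 : ℕ) : ℂ) + ((p.2.2 : ℕ) : ℂ)) • e p.1 p.2.1 p.2.2

/-- The Cartan operator `F̃`: `F̃ e(k,μ,ν) = (f+μ−ν)·e(k,μ,ν)`. -/
def Fop (f : ℂ) : Mmod →ₗ[ℂ] Mmod :=
  mkOp fun p =>
    (f + ((p.2.1 : ℕ) : ℂ) - ((p.2.2 : ℕ) : ℂ)) • e p.1 p.2.1 p.2.2

/-- The set of basis vectors of level `m` (the level of `e(k,μ,ν)` is `2k+μ+ν`). -/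
def levelVecs (m : ℕ) : Set Mmod :=
  {v | ∃ (k : ℕ) (μ ν : Fin 2), 2 * k + (μ : ℕ) + (ν : ℕ) = m ∧ v = e k μ ν}

/-- `v` is a singular vector at level `m ≥ 1`: it is nonzero, lies in the span of the
level-`m` basis vectors, and is annihilated by `A₋`, `c₊` and `c₋`. -/
def IsSingular (h f : ℂ) (m : ℕ) (v : Mmod) : Prop :=
  1 ≤ m ∧ v ≠ 0 ∧ v ∈ Submodule.span ℂ (levelVecs m) ∧
    Am h f v = 0 ∧ cp h f v = 0 ∧ cm h f v = 0

/-!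
Both sides are linear, so it suffices to compare them on the basis vectors `e k μ ν`. There each
of `c₊`, `c₋`, `A₋` has at most two terms, and for each `(μ, ν)` the identity becomes a
polynomial identity in `h`, `f`, `k` between the coefficients of at most two basis vectors.
-/

lemma hom_ext_e {M : Type*} [AddCommMonoid M] [Module ℂ M] {φ ψ : Mmod →ₗ[ℂ] M}
    (H : ∀ k μ ν, φ (e k μ ν) = ψ (e k μ ν)) : φ = ψ :=
  Finsupp.lhom_ext' fun ⟨k, μ, ν⟩ => LinearMap.ext_ring (H k μ ν)

@[simp]
lemma mkOp_e (φ : Idx → Mmod) (k : ℕ) (μ ν : Fin 2) : mkOp φ (e k μ ν) = φ (k, μ, ν) := by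
  simp [mkOp, e]

section

variable (h f : ℂ) (k : ℕ)

@[simp] lemma cp_e_zero_zero : cp h f (e k 0 0) = (2 * k : ℂ) • e (k - 1) 0 1 := by
  simp [cp]

@[simp] lemma cp_e_zero_one : cp h f (e k 0 1) = 0 := by
  simp [cp]

@[simp] lemma cp_e_one_zero :
    cp h f (e k 1 0) = (2 * (h + 2 * k - f)) • e k 0 0 - (2 * k : ℂ) • e (k - 1) 1 1 := by
  simp [cp, sub_eq_add_neg]

@[simp] lemma cp_e_one_one : cp h f (e k 1 1) = (2 * (h + 2 * k + 2 - f)) • e k 0 1 := by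
  simp [cp]

@[simp] lemma cm_e_zero_zero : cm h f (e k 0 0) = (2 * k : ℂ) • e (k - 1) 1 0 := by
  simp [cm]

@[simp] lemma cm_e_zero_one :
    cm h f (e k 0 1) = (2 * (h + f)) • e k 0 0 + (2 * k : ℂ) • e (k - 1) 1 1 := by
  simp [cm]

@[simp] lemma cm_e_one_zero : cm h f (e k 1 0) = 0 := by
  simp [cm]

@[simp] lemma cm_e_one_one : cm h f (e k 1 1) = (-2 * (h + f)) • e k 1 0 := by
  simp [cm]

@[simp] lemma Am_e_zero_zero : Am h f (e k 0 0) = (4 * k * (h + k - 1)) • e (k - 1) 0 0 := by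
  simp [Am]

@[simp] lemma Am_e_zero_one : Am h f (e k 0 1) = (4 * k * (h + k)) • e (k - 1) 0 1 := by
  simp [Am]

@[simp] lemma Am_e_one_zero : Am h f (e k 1 0) = (4 * k * (h + k)) • e (k - 1) 1 0 := by
  simp [Am]

@[simp] lemma Am_e_one_one :
    Am h f (e k 1 1) = (4 * k * (h + k + 1)) • e (k - 1) 1 1 + (4 * (h + f)) • e k 0 0 := by
  simp [Am]

end

/-- The Verma module realizes the relation `{c₊, c₋} = 2A₋`. -/
theorem anticommutator_cp_cm (h f : ℂ) :
    cp h f ∘ₗ cm h f + cm h f ∘ₗ cp h f = (2 : ℂ) • Am h f := by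
  refine hom_ext_e fun k μ ν => ?_
  -- splitting off `k = 0` lets `simp` turn the truncated `k + 1 - 1` into `k`
  fin_cases μ <;> fin_cases ν <;> rcases k with _ | k <;> simp <;> module
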